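/- Let f : X → ℝ be differentiable with L_f-Lipschitz gradient, g : X → ℝ ∪ {∞} proper lsc. Fix δ ∈ (0, 1/2), α ∈ (0, δ/2), τ > 0 and β ≥ 0 with β ≤ √(δ(τ − τ²L_f)/(4(1 + τL_f)²)) and τ ≤ 1/(2α + 2δ + L_f). Given x^k, x^{k−1} ∈ dom g, set y^k = x^k + β(x^k − x^{k−1}) and let x^{k+1} ∈ P_τ g(y^k − τ∇f(y^k)). Define H_δ(x, u) := f(x) + g(x) + (δ/2)‖x − u‖², z^k := (x^k, x^{k−1}), z^{k+1} := (x^{k+1}, x^k). Then H_δ(z^{k+1}) ≤ H_δ(z^k) − (α/2)‖z^{k+1} − z^k‖². -/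

import Mathlib

/-!
The descent lemma for the `L`-smooth `f`, at `y^k` towards `x^{k+1}` and towards `x^k`, together
with the prox inequality tested at `z = x^k`, gives
`F(x^{k+1}) ≤ F(x^k) - (τ⁻¹ - L)/2 ‖x^{k+1} - y^k‖² + (τ⁻¹ + L)/2 ‖x^k - y^k‖²`.
The parallelogram law trades the first term for `-(τ⁻¹ - L)/4 ‖x^{k+1} - x^k‖²`, leaving
`τ⁻¹ ‖x^k - y^k‖² = τ⁻¹ β² ‖x^k - x^{k-1}‖² ≤ δ/4 ‖x^k - x^{k-1}‖²` since `β² ≤ δτ/4`.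
The step size bound `τ⁻¹ ≥ 2α + 2δ + L` and `α < δ/2` then leave the margin `α/2` on both
components of `z^{k+1} - z^k`.
-/

open RealInnerProductSpace

section Smooth

variable {X : Type*} [NormedAddCommGroup X] [InnerProductSpace ℝ X] [CompleteSpace X]
  {f : X → ℝ} {f' : X → X} {L : NNReal}

theorem abs_sub_sub_inner_le_of_lipschitzWith_gradient
    (hf : ∀ x, HasGradientAt f (f' x) x) (hL : LipschitzWith L f') (a b : X) :
    |f b - f a - ⟪f' a, b - a⟫| ≤ L / 2 * ‖b - a‖ ^ 2 := by
  set v := b - a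
  let φ : ℝ → ℝ := fun t ↦ f (a + t • v) - f a - t * ⟪f' a, v⟫
  have hφ : ∀ t, HasDerivAt φ (⟪f' (a + t • v) - f' a, v⟫) t := by
    intro t
    have hline : HasDerivAt (fun t : ℝ ↦ a + t • v) v t := by
      simpa using ((hasDerivAt_id t).smul_const v).const_add a
    have := ((hf (a + t • v)).hasFDerivAt.comp_hasDerivAt t hline).sub_const (f a)
      |>.sub ((hasDerivAt_id t).mul_const ⟪f' a, v⟫)
    exact this.congr_deriv (by simp [inner_sub_left])
  have hB : ∀ t, HasDerivAt (fun t : ℝ ↦ L / 2 * t ^ 2 * ‖v‖ ^ 2) (L * t * ‖v‖ ^ 2) t := by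
    intro t
    exact (((hasDerivAt_pow 2 t).const_mul (L / 2 : ℝ)).mul_const (‖v‖ ^ 2)).congr_deriv
      (by push_cast; ring)
  have bound : ∀ t ∈ Set.Ico (0 : ℝ) 1, ‖⟪f' (a + t • v) - f' a, v⟫‖ ≤ L * t * ‖v‖ ^ 2 := by
    intro t ht
    calc ‖⟪f' (a + t • v) - f' a, v⟫‖ ≤ ‖f' (a + t • v) - f' a‖ * ‖v‖ := norm_inner_le_norm _ _
      _ ≤ L * ‖t • v‖ * ‖v‖ := by
        gcongr
        simpa [dist_eq_norm] using hL.dist_le_mul (a + t • v) a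
      _ = L * t * ‖v‖ ^ 2 := by rw [norm_smul, Real.norm_of_nonneg ht.1]; ring
  have hfence := image_norm_le_of_norm_deriv_right_le_deriv_boundary
    (fun t _ ↦ (hφ t).continuousAt.continuousWithinAt) (fun t _ ↦ (hφ t).hasDerivWithinAt)
    (by simp [φ]) hB bound (Set.right_mem_Icc.2 zero_le_one)
  simpa [φ, v] using hfence

theorem add_le_of_proxGrad_step (hf : ∀ x, HasGradientAt f (f' x) x)
    (hL : LipschitzWith L f') {τ r r₁ : ℝ} (hτ : 0 < τ) {x y x₁ : X}
    (hprox : 1 / (2 * τ) * ‖x₁ - (y - τ • f' y)‖ ^ 2 + r₁ ≤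
      1 / (2 * τ) * ‖x - (y - τ • f' y)‖ ^ 2 + r) :
    f x₁ + r₁ ≤ f x + r - (τ⁻¹ - L) / 2 * ‖x₁ - y‖ ^ 2 + (τ⁻¹ + L) / 2 * ‖x - y‖ ^ 2 := by
  have expand : ∀ u, 1 / (2 * τ) * ‖u - (y - τ • f' y)‖ ^ 2 =
      τ⁻¹ / 2 * ‖u - y‖ ^ 2 + ⟪f' y, u - y⟫ + τ / 2 * ‖f' y‖ ^ 2 := by
    intro u
    rw [show u - (y - τ • f' y) = (u - y) + τ • f' y by abel, norm_add_sq_real,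
      real_inner_smul_right, norm_smul, Real.norm_of_nonneg hτ.le, real_inner_comm]
    field_simp
  have h₁ := (abs_le.1 (abs_sub_sub_inner_le_of_lipschitzWith_gradient hf hL y x₁)).2
  have h := (abs_le.1 (abs_sub_sub_inner_le_of_lipschitzWith_gradient hf hL y x)).1
  rw [expand, expand] at hprox
  linarith

theorem add_le_of_proxGrad_step_of_le_inv (hf : ∀ x, HasGradientAt f (f' x) x)
    (hL : LipschitzWith L f') {τ r r₁ : ℝ} (hτ : 0 < τ) (hτL : L ≤ τ⁻¹) {x y x₁ : X}
    (hprox : 1 / (2 * τ) * ‖x₁ - (y - τ • f' y)‖ ^ 2 + r₁ ≤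
      1 / (2 * τ) * ‖x - (y - τ • f' y)‖ ^ 2 + r) :
    f x₁ + r₁ ≤ f x + r - (τ⁻¹ - L) / 4 * ‖x₁ - x‖ ^ 2 + τ⁻¹ * ‖x - y‖ ^ 2 := by
  have hpar : ‖x₁ - x‖ ^ 2 ≤ 2 * (‖x₁ - y‖ ^ 2 + ‖x - y‖ ^ 2) := by
    have := parallelogram_law_with_norm ℝ (x₁ - y) (y - x)
    rw [sub_add_sub_cancel, norm_sub_rev y x] at this
    linarith [sq_nonneg ‖x₁ - y - (y - x)‖]
  have hpar' := mul_le_mul_of_nonneg_left hpar (sub_nonneg.2 hτL)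
  linarith [add_le_of_proxGrad_step hf hL hτ hprox]

end Smooth

theorem sq_le_mul_div_four_of_le_sqrt {δ τ L β : ℝ} (hδ : 0 ≤ δ) (hτ : 0 ≤ τ) (hL : 0 ≤ L)
    (hβ0 : 0 ≤ β) (hβ : β ≤ √(δ * (τ - τ ^ 2 * L) / (4 * (1 + τ * L) ^ 2))) :
    β ^ 2 ≤ δ * τ / 4 := by
  have hτL : 0 ≤ τ * L := mul_nonneg hτ hL
  have : δ * (τ - τ ^ 2 * L) / (4 * (1 + τ * L) ^ 2) ≤ δ * τ / 4 := by
    rw [div_le_iff₀ (by positivity)]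
    have : 0 ≤ δ * τ * (τ * L) * (3 + τ * L) := by positivity
    nlinarith
  exact (Real.le_sqrt hβ0 (by positivity)).1 (hβ.trans (Real.sqrt_le_sqrt this))

theorem stmt12_general {X : Type*} [NormedAddCommGroup X] [InnerProductSpace ℝ X]
    [FiniteDimensional ℝ X]
    (f : X → ℝ) (f' : X → X) (hf : ∀ y, HasGradientAt f (f' y) y)
    (Lf : NNReal) (hLf : LipschitzWith Lf f')
    (g : X → EReal) (hne_bot : ∀ y, g y ≠ ⊥)
    (δ α τ β : ℝ)
    (hδ : δ ∈ Set.Ioo (0 : ℝ) (1 / 2)) (hα : α ∈ Set.Ioo (0 : ℝ) (δ / 2))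
    (hτ : 0 < τ) (hβ0 : 0 ≤ β)
    (hβ : β ≤ Real.sqrt (δ * (τ - τ ^ 2 * (Lf : ℝ)) / (4 * (1 + τ * (Lf : ℝ)) ^ 2)))
    (hτle : τ ≤ 1 / (2 * α + 2 * δ + (Lf : ℝ)))
    (xk xkm : X) (hxk : g xk ≠ ⊤)
    (yk : X) (hyk : yk = xk + β • (xk - xkm))
    (xk1 : X)
    (hmin : ∀ z : X,
      ((1 / (2 * τ) * ‖xk1 - (yk - τ • f' yk)‖ ^ 2 : ℝ) : EReal) + g xk1 ≤
      ((1 / (2 * τ) * ‖z - (yk - τ • f' yk)‖ ^ 2 : ℝ) : EReal) + g z) :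
    (f xk1 : EReal) + g xk1 + ((δ / 2 * ‖xk1 - xk‖ ^ 2 : ℝ) : EReal) +
        ((α / 2 * (‖xk1 - xk‖ ^ 2 + ‖xk - xkm‖ ^ 2) : ℝ) : EReal) ≤
      (f xk : EReal) + g xk + ((δ / 2 * ‖xk - xkm‖ ^ 2 : ℝ) : EReal) := by
  obtain ⟨hδ0, -⟩ := hδ
  obtain ⟨hα0, hαδ⟩ := hα
  have hτinv : 2 * α + 2 * δ + Lf ≤ τ⁻¹ := by
    rwa [← one_div, le_one_div (by positivity) hτ]
  have hprox := hmin xk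
  lift g xk to ℝ using ⟨hxk, hne_bot xk⟩ with r
  have hxk1 : g xk1 ≠ ⊤ := by
    intro htop
    rw [htop, EReal.add_top_of_ne_bot (EReal.coe_ne_bot _), top_le_iff, ← EReal.coe_add] at hprox
    exact EReal.coe_ne_top _ hprox
  lift g xk1 to ℝ using ⟨hxk1, hne_bot xk1⟩ with r₁
  norm_cast at hprox ⊢
  have hdesc := add_le_of_proxGrad_step_of_le_inv hf hLf hτ (by linarith) hprox
  have hinertia : τ⁻¹ * ‖xk - yk‖ ^ 2 ≤ δ / 4 * ‖xk - xkm‖ ^ 2 := by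
    have hβsq := sq_le_mul_div_four_of_le_sqrt hδ0.le hτ.le Lf.coe_nonneg hβ0 hβ
    rw [hyk, sub_add_cancel_left, norm_neg, norm_smul, Real.norm_of_nonneg hβ0, mul_pow,
      ← mul_assoc]
    gcongr
    rw [inv_mul_le_iff₀ hτ]
    linarith
  have hstep := mul_le_mul_of_nonneg_right hτinv (sq_nonneg ‖xk1 - xk‖)
  have hmargin := mul_le_mul_of_nonneg_right hαδ.le (sq_nonneg ‖xk - xkm‖)
  linarith

theorem stmt12 {X : Type*} [NormedAddCommGroup X] [InnerProductSpace ℝ X]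
    [FiniteDimensional ℝ X]
    (f : X → ℝ) (f' : X → X) (hf : ∀ y, HasGradientAt f (f' y) y)
    (Lf : NNReal) (hLf : LipschitzWith Lf f')
    (g : X → EReal) (hlsc : LowerSemicontinuous g) (hne_bot : ∀ y, g y ≠ ⊥)
    (δ α τ β : ℝ)
    (hδ : δ ∈ Set.Ioo (0 : ℝ) (1 / 2)) (hα : α ∈ Set.Ioo (0 : ℝ) (δ / 2))
    (hτ : 0 < τ) (hβ0 : 0 ≤ β)
    (hβ : β ≤ Real.sqrt (δ * (τ - τ ^ 2 * (Lf : ℝ)) / (4 * (1 + τ * (Lf : ℝ)) ^ 2)))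
    (hτle : τ ≤ 1 / (2 * α + 2 * δ + (Lf : ℝ)))
    (xk xkm : X) (hxk : g xk ≠ ⊤) (hxkm : g xkm ≠ ⊤)
    (yk : X) (hyk : yk = xk + β • (xk - xkm))
    (xk1 : X)
    (hmin : ∀ z : X,
      ((1 / (2 * τ) * ‖xk1 - (yk - τ • f' yk)‖ ^ 2 : ℝ) : EReal) + g xk1 ≤
      ((1 / (2 * τ) * ‖z - (yk - τ • f' yk)‖ ^ 2 : ℝ) : EReal) + g z) :
    (f xk1 : EReal) + g xk1 + ((δ / 2 * ‖xk1 - xk‖ ^ 2 : ℝ) : EReal) +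
        ((α / 2 * (‖xk1 - xk‖ ^ 2 + ‖xk - xkm‖ ^ 2) : ℝ) : EReal) ≤
      (f xk : EReal) + g xk + ((δ / 2 * ‖xk - xkm‖ ^ 2 : ℝ) : EReal) :=
  stmt12_general f f' hf Lf hLf g hne_bot δ α τ β hδ hα hτ hβ0 hβ hτle xk xkm hxk yk hyk xk1 hmin
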